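/- arXiv:1411.6205 — 2 statements merged into one kernel-verified Lean document; each statement's English description precedes it below -/
import Mathlib

section
/- Let ρ ≥ 1, let C = {x ∈ ℝ^ρ : ⟨x, u_i⟩ ≥ 0 for i = 1, …, k} be a rational polyhedral cone determined by finitely many nonzero integer vectors u₁, …, u_k ∈ ℤ^ρ, and let b ∈ C. Then there exists a positive integer m such that for every integer point ξ ∈ ℤ^ρ lying in the interior int(C) of C, one has mξ ∈ b + C, i.e. mξ − b ∈ C. -/
/-!
For an integer point `ξ` in the interior of the cone, every `⟪ξ, uᵢ⟫` is an integer, and it is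
strictly positive because `ξ` can be pushed slightly in the direction `-uᵢ` without leaving the
cone. Hence `⟪ξ, uᵢ⟫ ≥ 1`, and any `m` with `m ≥ ⟪b, uᵢ⟫` for all `i` gives
`⟪m • ξ - b, uᵢ⟫ ≥ m - ⟪b, uᵢ⟫ ≥ 0`.
-/

open Filter Topology RealInnerProductSpace

theorem inner_pos_of_mem_interior_setOf_inner_nonneg {E : Type*} [NormedAddCommGroup E]
    [InnerProductSpace ℝ E] {v x : E} (hv : v ≠ 0)
    (hx : x ∈ interior {y : E | 0 ≤ ⟪y, v⟫}) : 0 < ⟪x, v⟫ := by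
  have hlim : Tendsto (fun t : ℝ => x - t • v) (𝓝 0) (𝓝 x) :=
    (by fun_prop : Continuous fun t : ℝ => x - t • v).tendsto' 0 x (by simp)
  have hnear : ∀ᶠ t in 𝓝 (0 : ℝ), 0 ≤ ⟪x - t • v, v⟫ :=
    hlim.eventually_mem (mem_interior_iff_mem_nhds.1 hx)
  obtain ⟨t, hle, ht⟩ := ((hnear.filter_mono nhdsWithin_le_nhds).and
    (self_mem_nhdsWithin : Set.Ioi (0 : ℝ) ∈ 𝓝[>] 0)).exists
  rw [inner_sub_left, real_inner_smul_left, real_inner_self_eq_norm_sq] at hle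
  have : 0 < t * ‖v‖ ^ 2 := mul_pos ht (by positivity)
  linarith

theorem EuclideanSpace.exists_int_inner_eq {ι : Type*} [Fintype ι]
    {x y : EuclideanSpace ℝ ι} (hx : ∀ i, ∃ z : ℤ, x i = z) (hy : ∀ i, ∃ z : ℤ, y i = z) :
    ∃ z : ℤ, ⟪x, y⟫ = z := by
  choose a ha using hx
  choose b hb using hy
  refine ⟨∑ i, b i * a i, ?_⟩
  simp [PiLp.inner_apply, ha, hb]

theorem exists_pos_nat_forall_le {ι : Type*} [Finite ι] (f : ι → ℝ) :
    ∃ m : ℕ, 0 < m ∧ ∀ i, f i ≤ m := by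
  obtain ⟨M, hM⟩ := (Set.finite_range f).bddAbove
  obtain ⟨n, hn⟩ := exists_nat_ge M
  exact ⟨n + 1, n.succ_pos, fun i => (hM ⟨i, rfl⟩).trans (hn.trans (by simp))⟩

theorem stmt_4_general (ρ k : ℕ)
    (u : Fin k → Fin ρ → ℤ) (hu : ∀ i, u i ≠ 0)
    (uR : Fin k → EuclideanSpace ℝ (Fin ρ)) (huR : ∀ i j, uR i j = (u i j : ℝ))
    (C : Set (EuclideanSpace ℝ (Fin ρ)))
    (hC : C = {x : EuclideanSpace ℝ (Fin ρ) | ∀ i, 0 ≤ (inner ℝ x (uR i) : ℝ)})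
    (b : EuclideanSpace ℝ (Fin ρ)) :
    ∃ m : ℕ, 0 < m ∧
      ∀ ξ : EuclideanSpace ℝ (Fin ρ), (∀ i, ∃ z : ℤ, ξ i = (z : ℝ)) →
        ξ ∈ interior C → (m : ℝ) • ξ - b ∈ C := by
  subst hC
  obtain ⟨m, hm, hbm⟩ := exists_pos_nat_forall_le fun i => ⟪b, uR i⟫
  refine ⟨m, hm, fun ξ hξ hint i => ?_⟩
  have huR_ne : uR i ≠ 0 := fun h => hu i <| funext fun j => by
    simpa [h] using (huR i j).symm
  have hpos : 0 < ⟪ξ, uR i⟫ := by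
    refine inner_pos_of_mem_interior_setOf_inner_nonneg huR_ne (interior_mono ?_ hint)
    exact fun _ hx => hx i
  obtain ⟨z, hz⟩ := EuclideanSpace.exists_int_inner_eq hξ fun j => ⟨u i j, huR i j⟩
  have hone : 1 ≤ ⟪ξ, uR i⟫ := by
    rw [hz] at hpos ⊢
    exact_mod_cast (Int.cast_pos.1 hpos : 0 < z)
  rw [inner_sub_left, real_inner_smul_left, sub_nonneg]
  calc ⟪b, uR i⟫ ≤ m := hbm i
    _ = m * 1 := (mul_one _).symm
    _ ≤ m * ⟪ξ, uR i⟫ := by gcongr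

/-- For a rational polyhedral cone `C` and any `b ∈ C`, there is a positive integer `m`
such that `m • ξ - b ∈ C` for every integer point `ξ` in the interior of `C`. -/
theorem stmt_4 (ρ k : ℕ) (hρ : 1 ≤ ρ)
    (u : Fin k → Fin ρ → ℤ) (hu : ∀ i, u i ≠ 0)
    (uR : Fin k → EuclideanSpace ℝ (Fin ρ)) (huR : ∀ i j, uR i j = (u i j : ℝ))
    (C : Set (EuclideanSpace ℝ (Fin ρ)))
    (hC : C = {x : EuclideanSpace ℝ (Fin ρ) | ∀ i, 0 ≤ (inner ℝ x (uR i) : ℝ)})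
    (b : EuclideanSpace ℝ (Fin ρ)) (hb : b ∈ C) :
    ∃ m : ℕ, 0 < m ∧
      ∀ ξ : EuclideanSpace ℝ (Fin ρ), (∀ i, ∃ z : ℤ, ξ i = (z : ℝ)) →
        ξ ∈ interior C → (m : ℝ) • ξ - b ∈ C :=
  stmt_4_general ρ k u hu uR huR C hC b
end

section
/- Let Δ ⊆ ℝ² be a convex set and let S ⊆ Δ ∩ ℚ² be a set of points with rational coordinates such that (a) S is dense in Δ, and (b) S is closed under rational convex combinations, i.e. for all p, q ∈ S and every rational λ ∈ [0,1] one has λp + (1−λ)q ∈ S. Then every point of the interior of Δ with rational coordinates belongs to S. -/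
/-! Around a rational interior point `p`, density of `S` supplies three points of `S` close to the
vertices of a small triangle containing `p`. The barycentric coordinates of `p` with respect to
them are, up to normalisation, cross products of rational vectors, hence rational, and they stay
positive under small perturbations; so `p` is a rational convex combination of points of `S`. -/

open Filter Topology

section Triangle

variable {k : Type*}

def cross [CommRing k] (u v : k × k) : k := u.1 * v.2 - u.2 * v.1

theorem cross_smul_add_cross_smul_add_cross_smul [CommRing k] (u v w : k × k) :
    cross v w • u + cross w u • v + cross u v • w = 0 := by
  ext <;> simp only [cross, Prod.fst_add, Prod.snd_add, Prod.smul_fst, Prod.smul_snd, smul_eq_mul,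
    Prod.fst_zero, Prod.snd_zero] <;> ring

/-- The three cross products are twice the signed areas of `p q₂ q₃`, `p q₃ q₁`, `p q₁ q₂`, i.e.
unnormalised barycentric coordinates of `p`: the predicate says that `p` lies in the open
triangle `q₁ q₂ q₃`, taken positively oriented. -/
def StrictlyInsideTriangle [CommRing k] [PartialOrder k] (p q₁ q₂ q₃ : k × k) : Prop :=
  0 < cross (q₂ - p) (q₃ - p) ∧ 0 < cross (q₃ - p) (q₁ - p) ∧ 0 < cross (q₁ - p) (q₂ - p)

theorem Convex.mem_of_strictlyInsideTriangle [Field k] [LinearOrder k] [IsStrictOrderedRing k]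
    {T : Set (k × k)} (hT : Convex k T)
    {p q₁ q₂ q₃ : k × k} (h₁ : q₁ ∈ T) (h₂ : q₂ ∈ T) (h₃ : q₃ ∈ T)
    (hp : StrictlyInsideTriangle p q₁ q₂ q₃) : p ∈ T := by
  obtain ⟨hc₁, hc₂, hc₃⟩ := hp
  set c : Fin 3 → k :=
    ![cross (q₂ - p) (q₃ - p), cross (q₃ - p) (q₁ - p), cross (q₁ - p) (q₂ - p)]
  have hc : ∀ i, 0 < c i := by intro i; fin_cases i <;> assumption
  have hK : 0 < ∑ i, c i := Finset.sum_pos (fun i _ => hc i) Finset.univ_nonempty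
  have hbary : ∑ i, c i • ![q₁, q₂, q₃] i = (∑ i, c i) • p := by
    have := cross_smul_add_cross_smul_add_cross_smul (q₁ - p) (q₂ - p) (q₃ - p)
    simp only [c, Fin.sum_univ_three, Matrix.cons_val_zero, Matrix.cons_val_one,
      Matrix.cons_val]
    linear_combination (norm := module) this
  have hmem := hT.sum_mem (w := fun i => c i / ∑ j, c j) (z := ![q₁, q₂, q₃])
    (fun i (_ : i ∈ Finset.univ) => (div_pos (hc i) hK).le) (by rw [← Finset.sum_div, div_self hK.ne'])
    (by intro i _; fin_cases i <;> assumption)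
  simpa only [div_eq_inv_mul, mul_smul, ← Finset.smul_sum, hbary, inv_smul_smul₀ hK.ne']
    using hmem

end Triangle

theorem exists_strictlyInsideTriangle_of_mem_interior_closure {S : Set (ℝ × ℝ)} {p : ℝ × ℝ}
    (hp : p ∈ interior (closure S)) :
    ∃ q₁ ∈ S, ∃ q₂ ∈ S, ∃ q₃ ∈ S, StrictlyInsideTriangle p q₁ q₂ q₃ := by
  have hnear : ∀ w : ℝ × ℝ, ∀ᶠ t in 𝓝[>] (0 : ℝ), p + t • w ∈ closure S := fun w =>
    tendsto_nhdsWithin_of_tendsto_nhds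
      ((continuous_const.add (continuous_id.smul continuous_const)).tendsto' 0 p (by simp))
      |>.eventually (mem_interior_iff_mem_nhds.mp hp)
  obtain ⟨t, ⟨h₁, h₂, h₃⟩, ht⟩ :=
    ((hnear (1, 0)).and ((hnear (0, 1)).and (hnear (-1, -1)))).and self_mem_nhdsWithin |>.exists
  have hvert : (p + t • (1, 0), p + t • (0, 1), p + t • (-1, -1)) ∈ closure (S ×ˢ S ×ˢ S) := by
    rw [closure_prod_eq, closure_prod_eq]
    exact ⟨h₁, h₂, h₃⟩
  have hopen : IsOpen
      {x : (ℝ × ℝ) × (ℝ × ℝ) × (ℝ × ℝ) | StrictlyInsideTriangle p x.1 x.2.1 x.2.2} := by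
    simp only [StrictlyInsideTriangle, cross, Set.ofPred_and]
    refine (isOpen_lt continuous_const ?_).inter
      ((isOpen_lt continuous_const ?_).inter (isOpen_lt continuous_const ?_)) <;> fun_prop
  have hcenter : StrictlyInsideTriangle p (p + t • (1, 0)) (p + t • (0, 1)) (p + t • (-1, -1)) := by
    have ht2 : 0 < t * t := mul_pos ht ht
    simp only [StrictlyInsideTriangle, cross, add_sub_cancel_left, Prod.smul_mk, smul_eq_mul]
    refine ⟨?_, ?_, ?_⟩ <;> linarith
  obtain ⟨⟨q₁, q₂, q₃⟩, htri, hq₁, hq₂, hq₃⟩ := mem_closure_iff.mp hvert _ hopen hcenter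
  exact ⟨q₁, hq₁, q₂, hq₂, q₃, hq₃, htri⟩

def ratPoint (x : ℚ × ℚ) : ℝ × ℝ := ((x.1 : ℝ), (x.2 : ℝ))

theorem strictlyInsideTriangle_ratPoint_iff {p q₁ q₂ q₃ : ℚ × ℚ} :
    StrictlyInsideTriangle (ratPoint p) (ratPoint q₁) (ratPoint q₂) (ratPoint q₃) ↔
      StrictlyInsideTriangle p q₁ q₂ q₃ := by
  simp only [StrictlyInsideTriangle, cross, ratPoint, Prod.fst_sub, Prod.snd_sub]
  norm_cast

theorem convex_preimage_ratPoint {S : Set (ℝ × ℝ)}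
    (hS : ∀ p ∈ S, ∀ q ∈ S, ∀ l : ℚ, 0 ≤ l → l ≤ 1 → (l : ℝ) • p + (1 - (l : ℝ)) • q ∈ S) :
    Convex ℚ (ratPoint ⁻¹' S) := by
  intro x hx y hy a b ha hb hab
  obtain rfl : b = 1 - a := by linarith
  have hcast :
      ratPoint (a • x + (1 - a) • y) = (a : ℝ) • ratPoint x + (1 - (a : ℝ)) • ratPoint y := by
    ext <;> simp [ratPoint]
  rw [Set.mem_preimage, hcast]
  exact hS _ hx _ hy a ha (by linarith)

theorem stmt_7_general (Δ S : Set (ℝ × ℝ))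
    (hSrat : ∀ p ∈ S, ∃ a b : ℚ, p = ((a : ℝ), (b : ℝ)))
    (hdense : Δ ⊆ closure S)
    (hcomb : ∀ p ∈ S, ∀ q ∈ S, ∀ l : ℚ, 0 ≤ l → l ≤ 1 →
      (l : ℝ) • p + (1 - (l : ℝ)) • q ∈ S) :
    ∀ p ∈ interior Δ, (∃ a b : ℚ, p = ((a : ℝ), (b : ℝ))) → p ∈ S := by
  rintro p hp ⟨a, b, rfl⟩
  obtain ⟨q₁, h₁, q₂, h₂, q₃, h₃, htri⟩ :=
    exists_strictlyInsideTriangle_of_mem_interior_closure (interior_mono hdense hp)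
  obtain ⟨x₁, y₁, rfl⟩ := hSrat q₁ h₁
  obtain ⟨x₂, y₂, rfl⟩ := hSrat q₂ h₂
  obtain ⟨x₃, y₃, rfl⟩ := hSrat q₃ h₃
  exact (convex_preimage_ratPoint hcomb).mem_of_strictlyInsideTriangle (p := (a, b))
    (q₁ := (x₁, y₁)) (q₂ := (x₂, y₂)) (q₃ := (x₃, y₃)) h₁ h₂ h₃
    (strictlyInsideTriangle_ratPoint_iff.mp htri)

/-- If a set `S` of rational points of a convex set `Δ ⊆ ℝ²` is dense in `Δ` and closed
under rational convex combinations, then `S` contains every rational point of the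
interior of `Δ`. -/
theorem stmt_7 (Δ S : Set (ℝ × ℝ)) (hΔ : Convex ℝ Δ)
    (hSsub : S ⊆ Δ) (hSrat : ∀ p ∈ S, ∃ a b : ℚ, p = ((a : ℝ), (b : ℝ)))
    (hdense : Δ ⊆ closure S)
    (hcomb : ∀ p ∈ S, ∀ q ∈ S, ∀ l : ℚ, 0 ≤ l → l ≤ 1 →
      (l : ℝ) • p + (1 - (l : ℝ)) • q ∈ S) :
    ∀ p ∈ interior Δ, (∃ a b : ℚ, p = ((a : ℝ), (b : ℝ))) → p ∈ S :=
  stmt_7_general Δ S hSrat hdense hcomb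
end
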